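/- Let K ⊆ H ⊆ G be groups with involution setup as in the paper, and let A = (TH_{x,0})_θ/(TH_{x,0})^θ be the abelian quotient (embedded in Z(G) via g ↦ gθ(g)⁻¹), B ⊆ A the image of (h⁻¹TH_{x,0+}h)_θ. Then the number of double cosets (TH_{x,0+})hk(TH_{x,0})^θ as k ranges over (TH_{x,0})_θ equals the index [A : B], and [A : B] = [hAh⁻¹ : hBh⁻¹] = m_{TH_{x,0+}}^{TH_{x,0}}(h·θ). Abstractly: let C be a group, N a subgroup, D = C_θ, F = C^θ ⊴-type subgroup with D/F abelian, and let B ⊆ D/F be the image of (h⁻¹Nh)_θ; then the double cosets N h k F for k ∈ D are in bijection with (D/F)/B, of cardinality [D/F : B]. -/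

import Mathlib

/-! Write `D = stabZ θ` and `F = fixedSub θ`. An element of `D` is moved by `θ` only by a central
factor, so `θ` fixes commutators of `D`: `⁅D, D⁆ ≤ F`, i.e. `D/F` is abelian. Hence for
`k, k' ∈ D` the double cosets `N (h k) F` and `N (h k') F` agree iff `k'` lies in `(h⁻¹Nh) k F`,
iff `k⁻¹ k' ∈ (D ⊓ h⁻¹Nh) ⊔ F`; so they are indexed by `D ⧸ ((D ⊓ h⁻¹Nh) ⊔ F)`. The second
equality is the transport of all the subgroups involved along conjugation by `h`. -/

namespace Stmt19

variable {G : Type*} [Group G]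

/-- The action of `g` on automorphisms: `(g · θ)(h) = g θ(g⁻¹ h g) g⁻¹`. -/
def conjAct (g : G) (θ : MulAut G) : MulAut G := MulAut.conj g * θ * (MulAut.conj g)⁻¹

/-- The fixed points `G^θ` of `θ`, as a subgroup. -/
def fixedSub (θ : MulAut G) : Subgroup G where
  carrier := {g | θ g = g}
  one_mem' := map_one θ
  mul_mem' := by
    intro a b ha hb
    simp only [Set.mem_setOf_eq, map_mul] at *
    rw [ha, hb]
  inv_mem' := by
    intro a ha
    simp only [Set.mem_setOf_eq, map_inv] at *
    rw [ha]

/-- The stabilizer `G_θ = {g : g · θ = θ}` of `θ` under the conjugation action. -/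
def stabSub (θ : MulAut G) : Subgroup G where
  carrier := {g | conjAct g θ = θ}
  one_mem' := by simp [conjAct]
  mul_mem' := by
    intro a b ha hb
    simp only [Set.mem_setOf_eq, conjAct, map_mul, mul_inv_rev] at *
    calc MulAut.conj a * MulAut.conj b * θ * ((MulAut.conj b)⁻¹ * (MulAut.conj a)⁻¹)
        = MulAut.conj a * (MulAut.conj b * θ * (MulAut.conj b)⁻¹) * (MulAut.conj a)⁻¹ := by
          group
      _ = θ := by rw [hb]; exact ha
  inv_mem' := by
    intro a ha
    simp only [Set.mem_setOf_eq, conjAct, map_inv, inv_inv] at *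
    rw [mul_inv_eq_iff_eq_mul] at ha
    rw [mul_assoc, ← ha, inv_mul_cancel_left]


/-- The twisted stabilizer `G_θ = {g : g θ(g)⁻¹ ∈ Z(G)}` of `θ`. -/
def stabZ (θ : MulAut G) : Subgroup G where
  carrier := {g | g * (θ g)⁻¹ ∈ Subgroup.center G}
  one_mem' := by
    simp only [Set.mem_setOf_eq, map_one, inv_one, mul_one]
    exact Subgroup.one_mem _
  mul_mem' := by
    intro a b ha hb
    simp only [Set.mem_setOf_eq, map_mul, mul_inv_rev] at *
    have hz := Subgroup.mem_center_iff.mp hb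
    have h1 : a * b * ((θ b)⁻¹ * (θ a)⁻¹) = a * (b * (θ b)⁻¹) * (θ a)⁻¹ := by group
    have h2 : a * (b * (θ b)⁻¹) * (θ a)⁻¹ = (b * (θ b)⁻¹) * (a * (θ a)⁻¹) := by
      calc a * (b * (θ b)⁻¹) * (θ a)⁻¹ = (b * (θ b)⁻¹) * a * (θ a)⁻¹ := by rw [hz a]
        _ = (b * (θ b)⁻¹) * (a * (θ a)⁻¹) := by group
    rw [h1, h2]
    exact Subgroup.mul_mem _ hb ha
  inv_mem' := by
    intro a ha
    simp only [Set.mem_setOf_eq, map_inv, inv_inv] at *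
    have hz : (θ a) * a⁻¹ ∈ Subgroup.center G := by
      have h := Subgroup.inv_mem _ ha
      simpa using h
    have hc := Subgroup.mem_center_iff.mp hz
    have heq : a⁻¹ * θ a = θ a * a⁻¹ := by
      have h3 := hc a⁻¹
      calc a⁻¹ * θ a = a⁻¹ * (θ a * a⁻¹) * a := by group
        _ = (θ a * a⁻¹) * a⁻¹ * a := by rw [h3]
        _ = θ a * a⁻¹ := by group
    rw [heq]
    exact hz

open Subgroup DoubleCoset
open scoped commutatorElement

theorem commutatorElement_mul_central {z w : G} (hz : z ∈ center G) (hw : w ∈ center G)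
    (a b : G) : ⁅z * a, w * b⁆ = ⁅a, b⁆ := by
  have hzc : ∀ x, Commute z x := fun x => (mem_center_iff.mp hz x).symm
  have hwc : ∀ x, Commute w x := fun x => (mem_center_iff.mp hw x).symm
  rw [commutatorElement_def, commutatorElement_def]
  calc z * a * (w * b) * (z * a)⁻¹ * (w * b)⁻¹
      = z * (a * w * b * a⁻¹) * z⁻¹ * (b⁻¹ * w⁻¹) := by group
    _ = a * (w * (b * a⁻¹ * b⁻¹) * w⁻¹) := by rw [(hzc _).mul_inv_cancel]; group
    _ = a * b * a⁻¹ * b⁻¹ := by rw [(hwc _).mul_inv_cancel]; group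

theorem card_range_eq_index {α β : Type*} [Group α] (H : Subgroup α) (f : α → β)
    (hf : ∀ a b, f a = f b ↔ a⁻¹ * b ∈ H) : Nat.card (Set.range f) = H.index :=
  Nat.card_congr <| ((Quotient.congrRight fun a b =>
    QuotientGroup.leftRel_apply.trans (hf a b).symm).trans (Setoid.quotientKerEquivRange f)).symm

theorem doubleCoset_mul_left_eq_iff (N K : Subgroup G) (h k k' : G) :
    doubleCoset (h * k) N K = doubleCoset (h * k') N K ↔
      k' ∈ doubleCoset k (N.map (MulAut.conj h⁻¹).toMonoidHom) K := by
  refine rel_iff.trans ?_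
  simp only [mem_doubleCoset, SetLike.mem_coe, mem_map, exists_exists_and_eq_and,
    MulEquiv.coe_toMonoidHom, MulAut.conj_apply, inv_inv]
  refine exists_congr fun a => and_congr_right fun _ => exists_congr fun b =>
    and_congr_right fun _ => ?_
  rw [show h⁻¹ * a * h * k * b = h⁻¹ * (a * (h * k) * b) by group, eq_inv_mul_iff_mul_eq]

theorem mem_doubleCoset_iff_inv_mul_mem_sup {D F : Subgroup G} (L : Subgroup G) (hFD : F ≤ D)
    (hDF : ⁅D, D⁆ ≤ F) {k k' : G} (hk : k ∈ D) (hk' : k' ∈ D) :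
    k' ∈ doubleCoset k L F ↔ k⁻¹ * k' ∈ (D ⊓ L) ⊔ F := by
  have hcomm : ∀ {a b}, a ∈ D → b ∈ D → ⁅a, b⁆ ∈ F := fun ha hb =>
    hDF (commutator_mem_commutator ha hb)
  rw [mem_doubleCoset]
  constructor
  · rintro ⟨l, hl, f, hf, rfl⟩
    have hlD : l ∈ D :=
      (D.mul_mem_cancel_right hk).mp ((D.mul_mem_cancel_right (hFD hf)).mp hk')
    rw [show k⁻¹ * (l * k * f) = l * ⁅l⁻¹, k⁻¹⁆ * f by rw [commutatorElement_def]; group]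
    exact mul_mem (mul_mem (mem_sup_left ⟨hlD, hl⟩)
      (mem_sup_right (hcomm (inv_mem hlD) (inv_mem hk)))) (mem_sup_right hf)
  · intro hx
    have hnorm : D ⊓ L ≤ normalizer (F : Set G) := inf_le_left.trans
      (le_normalizer_iff_commutator_le_right.mpr ((commutator_mono le_rfl hFD).trans hDF))
    rw [← SetLike.mem_coe, coe_mul_of_left_le_normalizer_right _ _ hnorm] at hx
    obtain ⟨m, hm, f, hf, hmf : m * f = k⁻¹ * k'⟩ := hx
    refine ⟨m, hm.2, ⁅k⁻¹, m⁻¹⁆ * f, mul_mem (hcomm (inv_mem hk) (inv_mem hm.1)) hf, ?_⟩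
    calc k' = k * (m * f) := by rw [hmf]; group
      _ = m * k * (⁅k⁻¹, m⁻¹⁆ * f) := by rw [commutatorElement_def]; group

theorem fixedSub_le_stabZ (θ : MulAut G) : fixedSub θ ≤ stabZ θ := by
  intro g (hg : θ g = g)
  show g * (θ g)⁻¹ ∈ center G
  rw [hg, mul_inv_cancel]
  exact one_mem _

theorem commutator_stabZ_le_fixedSub (θ : MulAut G) : ⁅stabZ θ, stabZ θ⁆ ≤ fixedSub θ := by
  refine commutator_le.mpr fun a ha b hb => ?_
  have key (c : G) : θ c = (c * (θ c)⁻¹)⁻¹ * c := by group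
  show θ ⁅a, b⁆ = ⁅a, b⁆
  rw [map_commutatorElement, key a, key b]
  exact commutatorElement_mul_central (inv_mem ha) (inv_mem hb) a b

theorem stabZ_conj (σ θ : MulAut G) : stabZ (σ * θ * σ⁻¹) = (stabZ θ).map σ.toMonoidHom := by
  ext g
  rw [mem_map_equiv]
  show g * (σ (θ (σ.symm g)))⁻¹ ∈ center G ↔ σ.symm g * (θ (σ.symm g))⁻¹ ∈ center G
  have : g * (σ (θ (σ.symm g)))⁻¹ = σ (σ.symm g * (θ (σ.symm g))⁻¹) := by simp
  rw [this]
  exact MulEquivClass.apply_mem_center_iff σ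

theorem fixedSub_conj (σ θ : MulAut G) :
    fixedSub (σ * θ * σ⁻¹) = (fixedSub θ).map σ.toMonoidHom := by
  ext g
  rw [mem_map_equiv]
  show σ (θ (σ.symm g)) = g ↔ θ (σ.symm g) = σ.symm g
  rw [← σ.symm.injective.eq_iff]
  simp

theorem relIndex_sup_fixedSub_conj (σ θ : MulAut G) (N : Subgroup G) :
    ((stabZ θ ⊓ N.map σ⁻¹.toMonoidHom) ⊔ fixedSub θ).relIndex (stabZ θ)
      = ((stabZ (σ * θ * σ⁻¹) ⊓ N) ⊔ fixedSub (σ * θ * σ⁻¹)).relIndex (stabZ (σ * θ * σ⁻¹)) := by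
  have hN : (N.map σ⁻¹.toMonoidHom).map σ.toMonoidHom = N := by
    rw [map_map]
    ext
    simp
  rw [← relIndex_map_map_of_injective (f := σ.toMonoidHom) _ _ σ.injective, Subgroup.map_sup,
    map_inf _ _ _ σ.injective, hN, stabZ_conj, fixedSub_conj]

theorem double_coset_count_general (θ : MulAut G)
    (N : Subgroup G) (h : G) :
    Nat.card {s : Set G // ∃ k ∈ stabZ θ,
        s = {x : G | ∃ n ∈ N, ∃ f ∈ fixedSub θ, x = n * (h * k) * f}}
      = ((stabZ θ ⊓ N.map (MulAut.conj h⁻¹).toMonoidHom) ⊔ fixedSub θ).relIndex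
          (stabZ θ) ∧
    ((stabZ θ ⊓ N.map (MulAut.conj h⁻¹).toMonoidHom) ⊔ fixedSub θ).relIndex (stabZ θ)
      = ((stabZ (conjAct h θ) ⊓ N) ⊔ fixedSub (conjAct h θ)).relIndex
          (stabZ (conjAct h θ)) := by
  have hrel (k k' : stabZ θ) :
      doubleCoset (h * k) N (fixedSub θ) = doubleCoset (h * k') N (fixedSub θ) ↔
        k⁻¹ * k' ∈ ((stabZ θ ⊓ N.map (MulAut.conj h⁻¹).toMonoidHom) ⊔ fixedSub θ).subgroupOf
          (stabZ θ) :=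
    (doubleCoset_mul_left_eq_iff _ _ _ _ _).trans (mem_doubleCoset_iff_inv_mul_mem_sup _
      (fixedSub_le_stabZ θ) (commutator_stabZ_le_fixedSub θ) k.2 k'.2)
  refine ⟨?_, by rw [map_inv]; exact relIndex_sup_fixedSub_conj _ θ N⟩
  calc _ = Nat.card (Set.range fun k : stabZ θ => doubleCoset (h * k) N (fixedSub θ)) :=
        Nat.card_congr <| Equiv.subtypeEquivRight fun _ =>
          ⟨fun ⟨k, hk, hs⟩ => ⟨⟨k, hk⟩, hs ▸ Set.ext fun _ => mem_doubleCoset⟩,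
            fun ⟨k, hs⟩ => ⟨k, k.2, hs ▸ Set.ext fun _ => mem_doubleCoset⟩⟩
    _ = _ := card_range_eq_index _ _ hrel

/-- Abstract double-coset count: let `C` be a group, `θ` an involution of `C`,
`D = C_θ = {c : c θ(c)⁻¹ ∈ Z(C)}`, `F = C^θ`, `N` a subgroup and `h ∈ C`.  The number of
double cosets `N (h k) F` as `k` ranges over `D` equals the index
`[D : (h⁻¹Nh)_θ F]` (which is `[D/F : B]` for `B` the image of `(h⁻¹Nh)_θ` in the
abelian group `D/F`), and this index equals
`m_N^C(h·θ) = [C_{h·θ} : N_{h·θ} C^{h·θ}]`. -/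
theorem double_coset_count (θ : MulAut G) (hθ : θ * θ = 1)
    (N : Subgroup G) (h : G)
    (hfin : ((stabZ θ ⊓ N.map (MulAut.conj h⁻¹).toMonoidHom) ⊔ fixedSub θ).relIndex
        (stabZ θ) ≠ 0) :
    Nat.card {s : Set G // ∃ k ∈ stabZ θ,
        s = {x : G | ∃ n ∈ N, ∃ f ∈ fixedSub θ, x = n * (h * k) * f}}
      = ((stabZ θ ⊓ N.map (MulAut.conj h⁻¹).toMonoidHom) ⊔ fixedSub θ).relIndex
          (stabZ θ) ∧
    ((stabZ θ ⊓ N.map (MulAut.conj h⁻¹).toMonoidHom) ⊔ fixedSub θ).relIndex (stabZ θ)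
      = ((stabZ (conjAct h θ) ⊓ N) ⊔ fixedSub (conjAct h θ)).relIndex
          (stabZ (conjAct h θ)) :=
  double_coset_count_general θ N h

end Stmt19
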